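/- For coprime positive integers p, q with 1 ≤ q < p, Dedekind reciprocity holds: s(q,p) + s(p,q) = -1/4 + (p/q + q/p + 1/(pq))/12. -/

import Mathlib

open Classical

/-- The sawtooth function used in Dedekind sums. -/

noncomputable def saw (x : ℝ) : ℝ :=
  if x ∈ Set.range (Int.cast : ℤ → ℝ) then 0 else x - ⌊x⌋ - 1/2

/-- The Dedekind sum `s(q, p)`. -/
noncomputable def dedekindSum (q : ℤ) (p : ℕ) : ℝ :=
  ∑ k ∈ Finset.Icc 1 (p - 1), saw ((k : ℝ) / p) * saw ((k : ℝ) * q / p)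

/-!
Writing `((k/p)) = k/p - 1/2` and `((kq/p)) = (kq mod p)/p - 1/2`, and using that `k ↦ kq mod p`
permutes `1, …, p - 1`, gives `s(q,p) = M(q,p)/p² - (p - 1)/4` with `M(q,p) = ∑ k (kq mod p)`,
so reciprocity becomes a polynomial identity for `q² M(q,p) + p² M(p,q)`. Division with remainder
turns `M(q,p)` into the floor sum `∑ k ⌊kq/p⌋`. Counting the points `(r, s)` of `(0,p) × (0,q)`,
weighted by `r`, on the two sides of the diagonal `ps = qr` (which contains none of them, as `p` and
`q` are coprime) relates it to `∑ ⌊ps/q⌋ (⌊ps/q⌋ + 1)`, and division with remainder together with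
the same permutation argument expresses this sum through `M(p,q)`.
-/

open Finset

lemma saw_natCast_div {a p : ℕ} (hp : 0 < p) (ha : ¬p ∣ a) :
    saw (a / p) = (a % p : ℕ) / p - 1 / 2 := by
  have hfract : Int.fract ((a : ℝ) / p) = (a % p : ℕ) / p :=
    Int.fract_div_natCast_eq_div_natCast_mod
  have hne : Int.fract ((a : ℝ) / p) ≠ 0 := by
    rw [hfract]
    exact div_ne_zero (by exact_mod_cast (mt Nat.dvd_of_mod_eq_zero ha)) (by positivity)
  rw [saw, if_neg (by rwa [← Int.fract_eq_zero_iff]), Int.self_sub_floor, hfract]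

lemma two_mul_sum_Icc_id (n : ℕ) : 2 * ∑ i ∈ Icc 1 n, i = n * (n + 1) := by
  induction n with
  | zero => simp
  | succ n ih => rw [sum_Icc_succ_top (by omega), mul_add, ih]; ring

lemma six_mul_sum_Icc_sq (n : ℕ) : 6 * ∑ i ∈ Icc 1 n, i ^ 2 = n * (n + 1) * (2 * n + 1) := by
  induction n with
  | zero => simp
  | succ n ih => rw [sum_Icc_succ_top (by omega), mul_add, ih]; ring

def remainderMoment (q p : ℕ) : ℕ := ∑ r ∈ Icc 1 (p - 1), r * (q * r % p)

namespace Nat.Coprime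

variable {p q r : ℕ}

lemma not_dvd_mul (h : p.Coprime q) (hr : r ∈ Icc 1 (p - 1)) : ¬p ∣ q * r := by
  rw [mem_Icc] at hr
  exact fun hdvd => by have := Nat.le_of_dvd (by omega) (h.dvd_of_dvd_mul_left hdvd); omega

lemma sum_Icc_comp_mul_mod {M : Type*} [AddCommMonoid M] (h : p.Coprime q) (f : ℕ → M) :
    ∑ r ∈ Icc 1 (p - 1), f (q * r % p) = ∑ r ∈ Icc 1 (p - 1), f r := by
  have maps : Set.MapsTo (fun r => q * r % p) (Icc 1 (p - 1)) (Icc 1 (p - 1)) := by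
    intro r hr
    have hpos := Nat.pos_of_ne_zero (mt Nat.dvd_of_mod_eq_zero (h.not_dvd_mul hr))
    have hlt := Nat.mod_lt (q * r) (show 0 < p by simp only [coe_Icc, Set.mem_Icc] at hr; omega)
    simp only [coe_Icc, Set.mem_Icc]
    omega
  have inj : Set.InjOn (fun r => q * r % p) (Icc 1 (p - 1)) := by
    intro a ha b hb hab
    simp only [coe_Icc, Set.mem_Icc] at ha hb
    have := Nat.ModEq.cancel_left_of_coprime (c := q) h hab
    rwa [Nat.ModEq, Nat.mod_eq_of_lt (by omega), Nat.mod_eq_of_lt (by omega)] at this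
  exact sum_nbij _ maps inj (surjOn_of_injOn_of_card_le _ maps inj le_rfl) fun _ _ => rfl

lemma filter_mul_lt_mul_eq_Icc (h : p.Coprime q) (hr : r ∈ Icc 1 (p - 1)) :
    {s ∈ Icc 1 (q - 1) | p * s < q * r} = Icc 1 (q * r / p) := by
  have hne : ∀ s, p * s ≠ q * r := fun s e => h.not_dvd_mul hr ⟨s, e.symm⟩
  rw [mem_Icc] at hr
  have hq : 0 < q := Nat.pos_of_ne_zero fun hq => by
    rw [hq, Nat.coprime_zero_right] at h; omega
  ext s
  simp only [mem_filter, mem_Icc, Nat.le_div_iff_mul_le (show 0 < p by omega)]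
  constructor
  · rintro ⟨⟨hs, -⟩, hlt⟩
    exact ⟨hs, by linarith⟩
  · rintro ⟨hs, hle⟩
    have hlt : p * s < q * r := lt_of_le_of_ne (by linarith) (hne s)
    have hsq : p * s < p * q :=
      hlt.trans_le (by rw [mul_comm p]; exact Nat.mul_le_mul_left q (by omega))
    exact ⟨⟨hs, by have := Nat.lt_of_mul_lt_mul_left hsq; omega⟩, hlt⟩

lemma two_mul_sum_mul_div_add_sum_div_mul_succ (h : p.Coprime q) :
    2 * ∑ r ∈ Icc 1 (p - 1), r * (q * r / p) + ∑ s ∈ Icc 1 (q - 1), (p * s / q) * (p * s / q + 1) =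
      (q - 1) * (2 * ∑ r ∈ Icc 1 (p - 1), r) := by
  have below : ∀ r ∈ Icc 1 (p - 1),
      r * (q * r / p) = ∑ s ∈ Icc 1 (q - 1), if p * s < q * r then r else 0 := by
    intro r hr
    rw [← sum_filter, h.filter_mul_lt_mul_eq_Icc hr, sum_const, Nat.card_Icc, smul_eq_mul,
      Nat.add_sub_cancel, mul_comm]
  have above : ∀ s ∈ Icc 1 (q - 1),
      (p * s / q) * (p * s / q + 1) = 2 * ∑ r ∈ Icc 1 (p - 1), if q * r < p * s then r else 0 := by
    intro s hs
    rw [← sum_filter, h.symm.filter_mul_lt_mul_eq_Icc hs, two_mul_sum_Icc_id]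
  have split : ∀ r ∈ Icc 1 (p - 1), ∀ s ∈ Icc 1 (q - 1),
      (if p * s < q * r then r else 0) + (if q * r < p * s then r else 0) = r := by
    intro r hr s _
    have : p * s ≠ q * r := fun e => h.not_dvd_mul hr ⟨s, e.symm⟩
    split_ifs <;> omega
  rw [sum_congr rfl below, sum_congr rfl above, ← mul_sum, sum_comm (s := Icc 1 (q - 1)),
    ← mul_add, ← sum_add_distrib, mul_left_comm, mul_sum (Icc 1 (p - 1)) (fun r => r) (q - 1)]
  congr 1
  refine sum_congr rfl fun r hr => ?_
  rw [← sum_add_distrib, sum_congr rfl (split r hr), sum_const, Nat.card_Icc, smul_eq_mul,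
    Nat.add_sub_cancel, mul_comm]

lemma sq_mul_sum_div_mul_succ_add_remainderMoment (h : p.Coprime q) :
    q ^ 2 * ∑ s ∈ Icc 1 (q - 1), (p * s / q) * (p * s / q + 1) + 2 * p * remainderMoment p q
        + q * ∑ s ∈ Icc 1 (q - 1), s =
      (p ^ 2 + 1) * ∑ s ∈ Icc 1 (q - 1), s ^ 2 + p * q * ∑ s ∈ Icc 1 (q - 1), s := by
  have term : ∀ s, q ^ 2 * ((p * s / q) * (p * s / q + 1)) + 2 * p * (s * (p * s % q))
      + q * (p * s % q) = p ^ 2 * s ^ 2 + (p * s % q) ^ 2 + p * q * s := by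
    intro s
    have hdm := Nat.div_add_mod (p * s) q
    generalize p * s / q = g at hdm ⊢
    generalize p * s % q = m at hdm ⊢
    zify at hdm ⊢
    linear_combination (q * g + m + p * s - 2 * m + q) * hdm
  have hm : ∑ s ∈ Icc 1 (q - 1), p * s % q = ∑ s ∈ Icc 1 (q - 1), s :=
    h.symm.sum_Icc_comp_mul_mod id
  have hm2 : ∑ s ∈ Icc 1 (q - 1), (p * s % q) ^ 2 = ∑ s ∈ Icc 1 (q - 1), s ^ 2 :=
    h.symm.sum_Icc_comp_mul_mod (· ^ 2)
  rw [remainderMoment, ← hm, mul_sum, mul_sum, mul_sum, ← sum_add_distrib, ← sum_add_distrib,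
    sum_congr rfl fun s _ => term s, sum_add_distrib, sum_add_distrib, hm2, hm, ← mul_sum, ← mul_sum]
  ring

end Nat.Coprime

lemma dedekindSum_eq {p q : ℕ} (hp : 0 < p) (h : p.Coprime q) :
    dedekindSum q p = remainderMoment q p / p ^ 2 - (p - 1) / 4 := by
  have hterm : ∀ k ∈ Icc 1 (p - 1), saw (k / p) * saw (k * (q : ℤ) / p) =
      k * (q * k % p : ℕ) / p ^ 2 - (k + (q * k % p : ℕ)) / (2 * p) + 1 / 4 := by
    intro k hk
    have hk' := mem_Icc.mp hk
    have hcast : (k : ℝ) * (q : ℤ) = (q * k : ℕ) := by push_cast; ring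
    rw [hcast, saw_natCast_div hp (fun hd => by have := Nat.le_of_dvd (by omega) hd; omega),
      Nat.mod_eq_of_lt (by omega), saw_natCast_div hp (h.not_dvd_mul hk)]
    field_simp
    ring
  have hperm : ∑ k ∈ Icc 1 (p - 1), ((q * k % p : ℕ) : ℝ) = ∑ k ∈ Icc 1 (p - 1), (k : ℝ) :=
    h.sum_Icc_comp_mul_mod _
  have hgauss : 2 * ∑ k ∈ Icc 1 (p - 1), (k : ℝ) = (p - 1) * p := by
    have := congrArg (Nat.cast (R := ℝ)) (two_mul_sum_Icc_id (p - 1))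
    push_cast [Nat.cast_sub hp] at this
    linarith
  rw [dedekindSum, sum_congr rfl hterm, sum_add_distrib, sum_sub_distrib, ← sum_div, ← sum_div,
    sum_add_distrib, hperm, sum_const, Nat.card_Icc, nsmul_eq_mul, remainderMoment]
  push_cast [Nat.sub_add_cancel hp, Nat.cast_sub hp]
  field_simp
  linear_combination (-4 * (p : ℝ)) * hgauss

lemma mul_sum_mul_div_add_remainderMoment (p q : ℕ) :
    p * ∑ r ∈ Icc 1 (p - 1), r * (q * r / p) + remainderMoment q p =
      q * ∑ r ∈ Icc 1 (p - 1), r ^ 2 := by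
  rw [remainderMoment, mul_sum, mul_sum, ← sum_add_distrib]
  exact sum_congr rfl fun r _ => by linear_combination r * Nat.div_add_mod (q * r) p

lemma remainderMoment_reciprocity {p q : ℕ} (hp : 0 < p) (hq : 0 < q) (h : p.Coprime q) :
    12 * q ^ 2 * remainderMoment q p + 12 * p ^ 2 * remainderMoment p q + 9 * p ^ 2 * q ^ 2 =
      3 * p ^ 2 * q ^ 2 * (p + q) + p * q * (p ^ 2 + q ^ 2 + 1) := by
  have ha := mul_sum_mul_div_add_remainderMoment p q
  have hb := h.two_mul_sum_mul_div_add_sum_div_mul_succ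
  have hc := h.sq_mul_sum_div_mul_succ_add_remainderMoment
  have g1 := two_mul_sum_Icc_id (p - 1)
  have g2 := two_mul_sum_Icc_id (q - 1)
  have s1 := six_mul_sum_Icc_sq (p - 1)
  have s2 := six_mul_sum_Icc_sq (q - 1)
  zify [hp, hq] at ha hb hc g1 g2 s1 s2 ⊢
  linear_combination 12 * (q : ℤ) ^ 2 * ha - 6 * p * q ^ 2 * hb + 6 * p * hc + 2 * q ^ 3 * s1
    - 6 * p * q ^ 2 * (q - 1) * g1 + p * (p ^ 2 + 1) * s2 + 3 * p * q * (p - 1) * g2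

theorem dedekind_reciprocity (p q : ℕ) (hq : 1 ≤ q) (hqp : q < p)
    (hpq : Nat.Coprime p q) :
    dedekindSum (q : ℤ) p + dedekindSum (p : ℤ) q =
      -1/4 + ((p : ℝ) / q + (q : ℝ) / p + 1 / ((p : ℝ) * q)) / 12 := by
  have hp : 0 < p := by omega
  have key : (12 * q ^ 2 * remainderMoment q p + 12 * p ^ 2 * remainderMoment p q
      + 9 * p ^ 2 * q ^ 2 : ℝ) = 3 * p ^ 2 * q ^ 2 * (p + q) + p * q * (p ^ 2 + q ^ 2 + 1) := by
    exact_mod_cast remainderMoment_reciprocity hp hq hpq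
  rw [dedekindSum_eq hp hpq, dedekindSum_eq hq hpq.symm]
  field_simp
  linear_combination 4 * key
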